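/- arXiv:1005.1984 — 3 statements merged into one kernel-verified Lean document; each statement's English description precedes it below -/
import Mathlib

section
/- The only rational solution (x, y, z) ∈ ℚ³ of the equation 2y² = x⁴ − 17z⁴ is (0, 0, 0); in other words, the Reichardt–Lind curve has no rational point. -/
/-!
A rational point with `x ≠ 0` gives, after clearing denominators, coprime integers `a, b` and an
integer `c` with `2c² = a⁴ − 17b⁴`. Every prime `p ∣ c` is a square mod 17: for `p = 2` because
`2 ≡ 6²`, and for odd `p` because `17 ≡ (a/b)⁴` is a square mod `p`, so quadratic reciprocity
applies (`17 ≡ 1 mod 4`). Hence `|c| ≡ w²` and `2w⁴ ≡ a⁴ (mod 17)`; as 2 is not a fourth power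
mod 17, this forces `17 ∣ a` and `17 ∣ c`, and then `17 ∣ b`, contradicting coprimality.
-/

theorem Rat.den_pow_dvd_of_mul_pow_eq_intCast {q : ℚ} {k m : ℤ} {n : ℕ} (h : k * q ^ n = m) :
    (q.den : ℤ) ^ n ∣ k := by
  rcases eq_or_ne k 0 with rfl | hk
  · simp
  have hq : q ^ n = Rat.divInt m k := by
    rw [Rat.divInt_eq_div, ← h]
    field_simp
  have := Rat.den_dvd m k
  rwa [← hq, Rat.den_pow, Nat.cast_pow] at this

theorem Rat.den_eq_one_of_two_mul_sq_eq_intCast {q : ℚ} {m : ℤ} (h : 2 * q ^ 2 = m) :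
    q.den = 1 := by
  have hdvd : q.den ^ 2 ∣ 2 := by exact_mod_cast Rat.den_pow_dvd_of_mul_pow_eq_intCast (k := 2) h
  have hle : q.den ^ 2 ≤ 2 := Nat.le_of_dvd two_pos hdvd
  have := q.den_pos
  nlinarith

theorem isSquare_intCast_of_dvd_of_mul_sq_eq {a b c m k : ℤ} (hab : IsCoprime a b)
    (h : m * c ^ 2 = a ^ 4 - k * b ^ 4) {p : ℕ} [Fact p.Prime] (hpc : (p : ℤ) ∣ c) :
    IsSquare (k : ZMod p) := by
  have hc : (c : ZMod p) = 0 := (ZMod.intCast_zmod_eq_zero_iff_dvd c p).mpr hpc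
  have hp : Prime (p : ℤ) := Nat.prime_iff_prime_int.mp Fact.out
  have hb : (b : ZMod p) ≠ 0 := by
    rw [Ne, ZMod.intCast_zmod_eq_zero_iff_dvd]
    intro hpb
    have hpa : (p : ℤ) ∣ a := hp.dvd_of_dvd_pow (n := 4) <| by
      rw [show a ^ 4 = m * c ^ 2 + k * b ^ 4 by linear_combination -h]
      exact dvd_add ((dvd_pow hpc two_ne_zero).mul_left m) ((dvd_pow hpb four_ne_zero).mul_left k)
    exact hp.not_isUnit (hab.isUnit_of_dvd' hpa hpb)
  have hcast : (a : ZMod p) ^ 4 = k * (b : ZMod p) ^ 4 := by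
    have := congrArg (Int.cast : ℤ → ZMod p) h
    push_cast [hc] at this
    linear_combination -this
  refine ⟨(a : ZMod p) ^ 2 / (b : ZMod p) ^ 2, ?_⟩
  rw [div_mul_div_comm, ← pow_add, ← pow_add, hcast]
  field_simp

theorem isSquare_natCast_of_forall_prime_dvd {R : Type*} [CommSemiring R] {n : ℕ}
    (h : ∀ p : ℕ, p.Prime → p ∣ n → IsSquare (p : R)) : IsSquare (n : R) := by
  induction n using induction_on_primes with
  | zero => exact ⟨0, by simp⟩
  | one => exact ⟨1, by simp⟩
  | prime_mul p n hp ih =>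
    rw [Nat.cast_mul]
    exact (h p hp (dvd_mul_right p n)).mul (ih fun q hq hqn => h q hq (hqn.mul_left p))

namespace ReichardtLind

theorem prime_seventeen : Prime (17 : ℤ) := Int.prime_iff_natAbs_prime.mpr (by norm_num)

-- 2 = 6² is a square mod 17, but the fourth powers mod 17 are only 0, ±1, ±4.
theorem eq_zero_of_two_mul_pow_four_eq_pow_four :
    ∀ w a : ZMod 17, 2 * w ^ 4 = a ^ 4 → w = 0 ∧ a = 0 := by
  decide

variable {a b c : ℤ}

theorem isSquare_mod_seventeen_of_prime_dvd (hab : IsCoprime a b)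
    (h : 2 * c ^ 2 = a ^ 4 - 17 * b ^ 4) {p : ℕ} (hp : p.Prime) (hpc : (p : ℤ) ∣ c) :
    IsSquare (p : ZMod 17) := by
  have := Fact.mk hp
  rcases eq_or_ne p 2 with rfl | hp2
  · exact ⟨6, by decide⟩
  have : Fact (Nat.Prime 17) := ⟨by norm_num⟩
  exact (ZMod.exists_sq_eq_prime_iff_of_mod_four_eq_one (p := 17) (by norm_num) hp2).mpr
    (by exact_mod_cast isSquare_intCast_of_dvd_of_mul_sq_eq hab h hpc)

theorem seventeen_dvd_of_dvd (h : 2 * c ^ 2 = a ^ 4 - 17 * b ^ 4) (ha : 17 ∣ a) (hc : 17 ∣ c) :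
    17 ∣ b := by
  obtain ⟨a, rfl⟩ := ha
  obtain ⟨c, rfl⟩ := hc
  refine prime_seventeen.dvd_of_dvd_pow (n := 4) ⟨17 ^ 2 * a ^ 4 - 2 * c ^ 2, ?_⟩
  refine (mul_right_inj' (by norm_num : (17 : ℤ) ≠ 0)).mp ?_
  linear_combination h

theorem two_mul_sq_ne_of_isCoprime (hab : IsCoprime a b) : 2 * c ^ 2 ≠ a ^ 4 - 17 * b ^ 4 := by
  intro h
  obtain ⟨w, hw⟩ : IsSquare (c.natAbs : ZMod 17) := isSquare_natCast_of_forall_prime_dvd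
    fun p hp hpc => isSquare_mod_seventeen_of_prime_dvd hab h hp (Int.ofNat_dvd_left.mpr hpc)
  have hmod : 2 * w ^ 4 = (a : ZMod 17) ^ 4 := by
    have := congrArg (Int.cast : ℤ → ZMod 17) h
    rw [← Int.natAbs_sq c] at this
    simp only [Int.cast_mul, Int.cast_pow, Int.cast_sub, Int.cast_natCast, Int.cast_ofNat, hw]
      at this
    reduce_mod_char at this
    linear_combination this
  obtain ⟨hw0, ha0⟩ := eq_zero_of_two_mul_pow_four_eq_pow_four w a hmod
  have h17a : 17 ∣ a := (ZMod.intCast_zmod_eq_zero_iff_dvd a 17).mp ha0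
  have h17c : 17 ∣ c := Int.ofNat_dvd_left.mpr <|
    (ZMod.natCast_eq_zero_iff _ _).mp (by rw [hw, hw0, mul_zero])
  exact prime_seventeen.not_isUnit (hab.isUnit_of_dvd' h17a (seventeen_dvd_of_dvd h h17a h17c))

theorem two_mul_sq_ne_one_sub (u v : ℚ) : 2 * v ^ 2 ≠ 1 - 17 * u ^ 4 := by
  intro h
  have hc : 2 * (v * u.den ^ 2) ^ 2 = ((u.den ^ 4 - 17 * u.num ^ 4 : ℤ) : ℚ) := by
    rw [← Rat.num_div_den u] at h
    push_cast
    field_simp at h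
    linear_combination h
  rw [← (Rat.den_eq_one_iff _).mp (Rat.den_eq_one_of_two_mul_sq_eq_intCast hc)] at hc
  exact two_mul_sq_ne_of_isCoprime u.isCoprime_num_den.symm (by exact_mod_cast hc)

end ReichardtLind

/-- Theorem of Lind and Reichardt: the Reichardt–Lind curve `2y² = x⁴ − 17z⁴`
has no rational point. -/
theorem reichardt_lind_no_rational_point :
    ∀ x y z : ℚ, 2 * y ^ 2 = x ^ 4 - 17 * z ^ 4 → x = 0 ∧ y = 0 ∧ z = 0 := by
  intro x y z h
  rcases eq_or_ne x 0 with rfl | hx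
  · have hy : y ^ 2 = 0 := by nlinarith [sq_nonneg y, pow_nonneg (sq_nonneg z) 2]
    have hz : z ^ 4 = 0 := by nlinarith [sq_nonneg y, pow_nonneg (sq_nonneg z) 2]
    exact ⟨rfl, pow_eq_zero_iff two_ne_zero |>.mp hy, pow_eq_zero_iff four_ne_zero |>.mp hz⟩
  · refine absurd ?_ (ReichardtLind.two_mul_sq_ne_one_sub (z / x) (y / x ^ 2))
    field_simp
    linear_combination h
end

section
/- The only rational solution (x, y, z) ∈ ℚ³ of the equation x⁴ − 17z⁴ = 2(y² + 4z²)² is (0, 0, 0); in other words, the Schinzel curve has no rational point. -/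
/-!
After scaling, a rational point gives integers `V, X, Z` with `X, Z` coprime and
`V² = 2(X⁴ - 17Z⁴)`. An odd prime `p ∣ V` cannot divide `Z`, so `17` is a square mod `p`, and by
quadratic reciprocity `p` is a square mod `17`. As `2` and `-1` are squares mod `17` too, `V` is a
square mod `17`, nonzero by coprimality; then `V² ≡ 2X⁴` makes `2` a fourth power mod `17`,
which it is not.
-/

theorem Nat.isSquare_cast_of_forall_prime_dvd {R : Type*} [CommSemiring R] (n : ℕ)
    (h : ∀ p : ℕ, p.Prime → p ∣ n → IsSquare (p : R)) : IsSquare (n : R) := by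
  induction n using induction_on_primes with
  | zero => exact ⟨0, by simp⟩
  | one => exact ⟨1, by simp⟩
  | prime_mul p a hp ih =>
    rw [Nat.cast_mul]
    exact (h p hp (dvd_mul_right p a)).mul (ih fun q hq hqa => h q hq (hqa.mul_left p))

theorem Int.isSquare_cast_of_forall_prime_dvd {R : Type*} [CommRing R] (hR : IsSquare (-1 : R))
    (n : ℤ) (h : ∀ p : ℕ, p.Prime → (p : ℤ) ∣ n → IsSquare (p : R)) : IsSquare (n : R) := by
  have habs : IsSquare (n.natAbs : R) := Nat.isSquare_cast_of_forall_prime_dvd _ fun p hp hpn =>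
    h p hp (Int.dvd_natAbs.mp (Int.natCast_dvd_natCast.mpr hpn))
  rcases Int.natAbs_eq n with hn | hn <;> rw [hn]
  · rwa [Int.cast_natCast]
  · rw [Int.cast_neg, neg_eq_neg_one_mul, Int.cast_natCast]
    exact hR.mul habs

theorem Rat.exists_isCoprime_mul (x z : ℚ) :
    ∃ t : ℚ, ∃ X Z : ℤ, IsCoprime X Z ∧ x = t * X ∧ z = t * Z := by
  set d : ℤ := x.den * z.den
  set A : ℤ := x.num * z.den
  set B : ℤ := z.num * x.den
  have hd : (d : ℚ) ≠ 0 := by positivity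
  have hx : x = A / d := by
    rw [eq_div_iff hd]; push_cast [A, d]; rw [← Rat.mul_den_eq_num]; ring
  have hz : z = B / d := by
    rw [eq_div_iff hd]; push_cast [B, d]; rw [← Rat.mul_den_eq_num]; ring
  rcases (Int.gcd A B).eq_zero_or_pos with h0 | hpos
  · obtain ⟨hA, hB⟩ := Int.gcd_eq_zero_iff.mp h0
    exact ⟨0, 1, 0, isCoprime_one_left, by rw [hx, hA]; simp, by rw [hz, hB]; simp⟩
  · obtain ⟨g, X, Z, -, hXZ, hA, hB⟩ := Int.exists_gcd_one' hpos
    refine ⟨g / d, X, Z, Int.isCoprime_iff_gcd_eq_one.mpr hXZ, ?_, ?_⟩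
    · rw [hx, hA]; push_cast; ring
    · rw [hz, hB]; push_cast; ring

theorem Int.dvd_of_dvd_two_mul {p : ℕ} (hp : p.Prime) (hp2 : p ≠ 2) {n : ℤ}
    (h : (p : ℤ) ∣ 2 * n) : (p : ℤ) ∣ n :=
  ((Nat.prime_iff_prime_int.mp hp).dvd_or_dvd h).resolve_left fun h2 =>
    hp2 ((Nat.prime_dvd_prime_iff_eq hp Nat.prime_two).mp (by exact_mod_cast h2))

theorem isSquare_of_pow_four_eq_mul_pow_four {F : Type*} [Field F] {x z c : F} (hz : z ≠ 0)
    (h : x ^ 4 = c * z ^ 4) : IsSquare c :=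
  ⟨x ^ 2 / z ^ 2, by
    rw [div_mul_div_comm, ← pow_add, ← pow_add, h, mul_div_cancel_right₀ _ (pow_ne_zero 4 hz)]⟩

theorem ZMod.eq_zero_of_pow_four_eq_two_mul_pow_four_seventeen :
    ∀ a b : ZMod 17, a ^ 4 = 2 * b ^ 4 → a = 0 := by
  decide

section

variable {X Z V : ℤ}

theorem not_seventeen_dvd_of_sq_eq (hXZ : IsCoprime X Z) (h : V ^ 2 = 2 * (X ^ 4 - 17 * Z ^ 4)) :
    ¬ ((17 : ℕ) : ℤ) ∣ V := by
  have h17 : Nat.Prime 17 := by norm_num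
  rintro ⟨v, rfl⟩
  obtain ⟨a, rfl⟩ : ((17 : ℕ) : ℤ) ∣ X := Int.Prime.dvd_pow' (k := 4) h17 <|
    Int.dvd_of_dvd_two_mul h17 (by norm_num) ⟨17 * v ^ 2 + 2 * Z ^ 4, by linear_combination -h⟩
  have hZ : ((17 : ℕ) : ℤ) ∣ Z := Int.Prime.dvd_pow' (k := 4) h17 <|
    Int.dvd_of_dvd_two_mul h17 (by norm_num) ⟨2 * 17 ^ 2 * a ^ 4 - v ^ 2,
      mul_left_cancel₀ (by norm_num : (17 : ℤ) ≠ 0) (by linear_combination h)⟩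
  exact (Nat.prime_iff_prime_int.mp h17).not_isUnit (hXZ.isUnit_of_dvd' (dvd_mul_right _ _) hZ)

theorem isSquare_prime_cast_zmod_seventeen_of_dvd (hXZ : IsCoprime X Z)
    (h : V ^ 2 = 2 * (X ^ 4 - 17 * Z ^ 4)) {p : ℕ} (hp : p.Prime) (hpV : (p : ℤ) ∣ V) :
    IsSquare (p : ZMod 17) := by
  rcases eq_or_ne p 2 with rfl | hp2
  · exact ⟨6, by decide⟩
  have hdvd : (p : ℤ) ∣ X ^ 4 - 17 * Z ^ 4 :=
    Int.dvd_of_dvd_two_mul hp hp2 (h ▸ dvd_pow hpV two_ne_zero)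
  have hpZ : ¬ (p : ℤ) ∣ Z := fun hpZ => by
    have hpX4 := dvd_add hdvd (dvd_mul_of_dvd_right (dvd_pow hpZ four_ne_zero) 17)
    rw [sub_add_cancel] at hpX4
    have hpX := Int.Prime.dvd_pow' hp hpX4
    exact (Nat.prime_iff_prime_int.mp hp).not_isUnit (hXZ.isUnit_of_dvd' hpX hpZ)
  have := Fact.mk hp
  have : Fact (Nat.Prime 17) := ⟨by norm_num⟩
  have h17 : IsSquare (17 : ZMod p) := by
    refine isSquare_of_pow_four_eq_mul_pow_four (x := (X : ZMod p)) (z := Z) ?_ ?_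
    · rwa [ne_eq, ZMod.intCast_zmod_eq_zero_iff_dvd]
    · have hdvd' := (ZMod.intCast_zmod_eq_zero_iff_dvd _ p).mpr hdvd
      push_cast at hdvd'
      linear_combination hdvd'
  exact (ZMod.exists_sq_eq_prime_iff_of_mod_four_eq_one (p := 17) rfl hp2).mpr
    (by exact_mod_cast h17)

theorem sq_ne_two_mul_pow_four_sub_seventeen_mul_pow_four (hXZ : IsCoprime X Z) :
    V ^ 2 ≠ 2 * (X ^ 4 - 17 * Z ^ 4) := by
  intro h
  obtain ⟨s, hs⟩ : IsSquare (V : ZMod 17) := Int.isSquare_cast_of_forall_prime_dvd ⟨4, by decide⟩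
    V fun p hp hpV => isSquare_prime_cast_zmod_seventeen_of_dvd hXZ h hp hpV
  have hmod : s ^ 4 = 2 * (X : ZMod 17) ^ 4 := by
    have h' := congrArg (Int.cast : ℤ → ZMod 17) h
    push_cast at h'
    rw [hs, show (17 : ZMod 17) = 0 from rfl] at h'
    linear_combination h'
  refine not_seventeen_dvd_of_sq_eq hXZ h ((ZMod.intCast_zmod_eq_zero_iff_dvd V 17).mp ?_)
  rw [hs, ZMod.eq_zero_of_pow_four_eq_two_mul_pow_four_seventeen s _ hmod, mul_zero]

end

/-- Schinzel's theorem: the Schinzel quartic `x⁴ − 17z⁴ = 2(y² + 4z²)²`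
has no rational point. -/
theorem schinzel_no_rational_point :
    ∀ x y z : ℚ, x ^ 4 - 17 * z ^ 4 = 2 * (y ^ 2 + 4 * z ^ 2) ^ 2 →
      x = 0 ∧ y = 0 ∧ z = 0 := by
  intro x y z h
  obtain ⟨t, X, Z, hXZ, rfl, rfl⟩ := Rat.exists_isCoprime_mul x z
  rcases eq_or_ne t 0 with rfl | ht
  · simp_all
  exfalso
  have hV : (2 * (y ^ 2 + 4 * (t * Z) ^ 2) / t ^ 2) ^ 2 = ((2 * (X ^ 4 - 17 * Z ^ 4) : ℤ) : ℚ) := by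
    push_cast
    field_simp
    linear_combination -h
  obtain ⟨V, hVV⟩ := Rat.isSquare_intCast_iff.mp ⟨_, (sq _).symm.trans hV |>.symm⟩
  exact sq_ne_two_mul_pow_four_sub_seventeen_mul_pow_four hXZ (sq V ▸ hVV.symm)
end

section
/- For every prime number p there exist x, y, z ∈ ℚ_p, not all zero, with 2y² = x⁴ − 17z⁴, and there exist x, y, z ∈ ℝ, not all zero, with 2y² = x⁴ − 17z⁴. -/
/-!
Over `ℝ` the point `(√2, √2, 0)` works. Over `ℚ_p` a point comes from Hensel's lemma. For `p = 2`,
`3` is a fourth root of `17` modulo `2⁶` and the derivative `4 · 3³` has valuation `2`. For odd `p`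
it suffices to find a smooth point modulo `p`. A case analysis on which of `2`, `-1` and `17` are
squares mod `p` finds one, using that a product of two non-squares in a finite field is a square.
-/

open Polynomial

section FiniteField

variable {F : Type*} [Field F] [Fintype F]

theorem FiniteField.isSquare_mul_of_not_isSquare {a b : F} (ha : ¬IsSquare a)
    (hb : ¬IsSquare b) : IsSquare (a * b) := by
  classical
  have hab : a * b ≠ 0 :=
    mul_ne_zero (fun h => ha (h ▸ IsSquare.zero)) (fun h => hb (h ▸ IsSquare.zero))
  rw [← quadraticChar_one_iff_isSquare hab, map_mul,
    quadraticChar_neg_one_iff_not_isSquare.2 ha, quadraticChar_neg_one_iff_not_isSquare.2 hb]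
  norm_num

theorem FiniteField.exists_pow_four_eq_sq_of_not_isSquare_neg_one (h : ¬IsSquare (-1 : F))
    (a : F) : ∃ b : F, b ^ 4 = a ^ 2 := by
  by_cases ha : IsSquare a
  · obtain ⟨b, rfl⟩ := ha
    exact ⟨b, by ring⟩
  · obtain ⟨b, hb⟩ := isSquare_mul_of_not_isSquare h ha
    exact ⟨b, by linear_combination (a - b * b) * hb⟩

end FiniteField

theorem isSquare_two_of_pow_four_eq_neg_one {F : Type*} [Field F] {u : F} (hu : u ^ 4 = -1) :
    IsSquare (2 : F) := by
  have hu0 : u ≠ 0 := by rintro rfl; norm_num at hu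
  refine ⟨u + u⁻¹, ?_⟩
  field_simp
  linear_combination -hu

namespace PadicInt

variable {p : ℕ} [Fact p.Prime]

theorem toZMod_eq_zero_iff {x : ℤ_[p]} : toZMod x = 0 ↔ ‖x‖ < 1 := by
  rw [← RingHom.mem_ker, ker_toZMod, IsLocalRing.mem_maximalIdeal, mem_nonunits]

theorem norm_eq_one_of_toZMod_ne_zero {x : ℤ_[p]} (h : toZMod x ≠ 0) : ‖x‖ = 1 :=
  (norm_le_one x).eq_or_lt.resolve_right (mt toZMod_eq_zero_iff.2 h)

theorem exists_root_of_toZMod (f : ℤ_[p][X]) {a : ZMod p} (ha : (f.map toZMod).eval a = 0)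
    (ha' : (f.map toZMod).derivative.eval a ≠ 0) :
    ∃ x : ℤ_[p], f.eval x = 0 ∧ toZMod x = a := by
  obtain ⟨a₀, rfl⟩ := ZMod.ringHom_surjective toZMod a
  rw [eval_map_apply] at ha
  rw [derivative_map, eval_map_apply] at ha'
  have hd : ‖f.derivative.eval a₀‖ = 1 := norm_eq_one_of_toZMod_ne_zero ha'
  obtain ⟨x, hx, hxa, -⟩ := hensels_lemma (F := f) (a := a₀) (by
    simpa only [coe_aeval_eq_eval, hd, one_pow] using toZMod_eq_zero_iff.1 ha)
  rw [coe_aeval_eq_eval, hd, ← toZMod_eq_zero_iff, map_sub, sub_eq_zero] at hxa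
  exact ⟨x, by simpa only [coe_aeval_eq_eval] using hx, hxa⟩

theorem exists_mul_pow_eq_of_toZMod {a c : ℤ_[p]} {n : ℕ} {y₀ : ZMod p} (ha : toZMod a ≠ 0)
    (hn : (n : ZMod p) ≠ 0) (hy₀ : y₀ ≠ 0) (h : toZMod a * y₀ ^ n = toZMod c) :
    ∃ y : ℤ_[p], a * y ^ n = c ∧ toZMod y = y₀ := by
  obtain ⟨y, hy, rfl⟩ := exists_root_of_toZMod (C a * X ^ n - C c) (a := y₀)
    (by simp [h]) (by simp [derivative_X_pow, ha, hn, hy₀])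
  exact ⟨y, by simpa [sub_eq_zero] using hy, rfl⟩

end PadicInt

namespace ReichardtLind

def HasPoint (R : Type*) [CommRing R] : Prop :=
  ∃ x y z : R, ¬(x = 0 ∧ y = 0 ∧ z = 0) ∧ 2 * y ^ 2 = x ^ 4 - 17 * z ^ 4

theorem HasPoint.map {R S : Type*} [CommRing R] [CommRing S] {f : R →+* S}
    (hf : Function.Injective f) : HasPoint R → HasPoint S := by
  rintro ⟨x, y, z, hne, h⟩
  refine ⟨f x, f y, f z, ?_, by simpa [map_ofNat] using congrArg f h⟩
  simpa only [map_eq_zero_iff f hf] using hne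

theorem hasPoint_of_pow_four_eq {R : Type*} [CommRing R] [Nontrivial R] {w : R}
    (hw : w ^ 4 = 17) : HasPoint R :=
  ⟨w, 0, 1, by simp, by simp [hw]⟩

theorem hasPoint_real : HasPoint ℝ := by
  have h2 : √2 ^ 2 = 2 := Real.sq_sqrt (by norm_num)
  refine ⟨√2, √2, 0, by simp, ?_⟩
  rw [show √2 ^ 4 = (√2 ^ 2) ^ 2 by ring, h2]
  norm_num

/-- Up to scaling, the smooth points of the curve away from characteristic `2`: those with
`y ≠ 0`, and those with `y = 0`, normalised to `z = 1`. -/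
def HasSmoothPoint (F : Type*) [Field F] : Prop :=
  (∃ x y z : F, y ≠ 0 ∧ 2 * y ^ 2 = x ^ 4 - 17 * z ^ 4) ∨ ∃ w : F, w ≠ 0 ∧ w ^ 4 = 17

section SmoothPoint

variable {F : Type*} [Field F]

theorem seventeen_ne_zero_of_not_isSquare_two (h : ¬IsSquare (2 : F)) : (17 : F) ≠ 0 :=
  fun h17 => h ⟨6, by linear_combination -2 * h17⟩

theorem hasSmoothPoint_of_isSquare_two (h2 : (2 : F) ≠ 0) (hs2 : IsSquare (2 : F)) :
    HasSmoothPoint F := by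
  obtain ⟨r, hr⟩ := hs2
  have hr0 : r ≠ 0 := by rintro rfl; exact h2 (by simpa using hr)
  refine Or.inl ⟨1, r / 2, 0, div_ne_zero hr0 h2, ?_⟩
  field_simp
  linear_combination -hr

variable [Fintype F]

theorem hasSmoothPoint_of_isSquare_seventeen (hs2 : ¬IsSquare (2 : F))
    (hn1 : IsSquare (-1 : F)) (hs17 : IsSquare (17 : F)) : HasSmoothPoint F := by
  obtain ⟨s, hs⟩ := hs17
  by_cases hss : IsSquare s
  · obtain ⟨w, rfl⟩ := hss
    refine Or.inr ⟨w, ?_, by rw [hs]; ring⟩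
    rintro rfl
    exact seventeen_ne_zero_of_not_isSquare_two hs2 (by simpa using hs)
  obtain ⟨i, hi⟩ := hn1
  have hins : ¬IsSquare i := by
    rintro ⟨u, rfl⟩
    exact hs2 (isSquare_two_of_pow_four_eq_neg_one (by linear_combination -hi))
  obtain ⟨t, ht⟩ := FiniteField.isSquare_mul_of_not_isSquare hins hss
  have ht4 : t ^ 4 = -17 := by linear_combination (-(i * s + t * t)) * ht - s * s * hi + hs
  have ht0 : t ≠ 0 := by
    rintro rfl
    exact seventeen_ne_zero_of_not_isSquare_two hs2 (by linear_combination ht4)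
  refine Or.inl ⟨1, 1, t⁻¹, one_ne_zero, ?_⟩
  field_simp
  linear_combination ht4

theorem hasSmoothPoint_of_not_isSquare_seventeen (hs2 : ¬IsSquare (2 : F))
    (hn1 : IsSquare (-1 : F)) (hs17 : ¬IsSquare (17 : F)) : HasSmoothPoint F := by
  obtain ⟨r, hr⟩ := hn1.mul (FiniteField.isSquare_mul_of_not_isSquare hs2 hs17)
  have h2 : (2 : F) ≠ 0 := by rintro h; exact hs2 (h ▸ IsSquare.zero)
  have hr0 : r ≠ 0 := by
    rintro rfl
    exact mul_ne_zero h2 (seventeen_ne_zero_of_not_isSquare_two hs2) (by linear_combination -hr)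
  refine Or.inl ⟨0, r / 2, 1, div_ne_zero hr0 h2, ?_⟩
  field_simp
  linear_combination -hr

end SmoothPoint

section PrimeField

variable {p : ℕ} [Fact p.Prime]

theorem hasSmoothPoint_zmod_of_not_isSquare_neg_one (hs2 : ¬IsSquare (2 : ZMod p))
    (hn1 : ¬IsSquare (-1 : ZMod p)) : HasSmoothPoint (ZMod p) := by
  obtain ⟨d, hd⟩ := FiniteField.isSquare_mul_of_not_isSquare hn1 hs2
  obtain ⟨a, w, haw⟩ := ZMod.sq_add_sq p 17
  obtain ⟨b, hb⟩ := FiniteField.exists_pow_four_eq_sq_of_not_isSquare_neg_one hn1 a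
  have h17 := seventeen_ne_zero_of_not_isSquare_two hs2
  by_cases hw : w = 0
  · refine Or.inr ⟨b, ?_, by rw [hb, ← haw, hw]; ring⟩
    rintro rfl
    exact h17 (by linear_combination -haw - hb + w * hw)
  have hd0 : d ≠ 0 := by
    rintro rfl
    exact hs2 ⟨0, by linear_combination -hd⟩
  refine Or.inl ⟨b, w / d, 1, div_ne_zero hw hd0, ?_⟩
  field_simp
  linear_combination -d ^ 2 * hb + 2 * haw - (17 - a ^ 2) * hd

theorem hasSmoothPoint_zmod (h2 : (2 : ZMod p) ≠ 0) : HasSmoothPoint (ZMod p) := by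
  by_cases hs2 : IsSquare (2 : ZMod p)
  · exact hasSmoothPoint_of_isSquare_two h2 hs2
  by_cases hn1 : IsSquare (-1 : ZMod p)
  · by_cases hs17 : IsSquare (17 : ZMod p)
    · exact hasSmoothPoint_of_isSquare_seventeen hs2 hn1 hs17
    · exact hasSmoothPoint_of_not_isSquare_seventeen hs2 hn1 hs17
  · exact hasSmoothPoint_zmod_of_not_isSquare_neg_one hs2 hn1

theorem hasPoint_padicInt_of_hasSmoothPoint (h2 : (2 : ZMod p) ≠ 0)
    (h : HasSmoothPoint (ZMod p)) : HasPoint ℤ_[p] := by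
  have h4 : (4 : ZMod p) ≠ 0 := by
    rw [show (4 : ZMod p) = 2 * 2 by norm_num]
    exact mul_ne_zero h2 h2
  rcases h with ⟨x₀, y₀, z₀, hy₀, h⟩ | ⟨w, hw0, hw⟩
  · obtain ⟨x, rfl⟩ := ZMod.ringHom_surjective PadicInt.toZMod x₀
    obtain ⟨z, rfl⟩ := ZMod.ringHom_surjective PadicInt.toZMod z₀
    obtain ⟨y, hy, rfl⟩ := PadicInt.exists_mul_pow_eq_of_toZMod (a := 2) (n := 2)
      (c := x ^ 4 - 17 * z ^ 4) (by simpa [map_ofNat] using h2) (by simpa using h2) hy₀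
      (by simpa [map_ofNat] using h)
    exact ⟨x, y, z, fun h0 => hy₀ (by rw [h0.2.1, map_zero]), hy⟩
  · obtain ⟨x, hx, -⟩ := PadicInt.exists_mul_pow_eq_of_toZMod (a := 1) (n := 4) (c := 17)
      (by simp) (by simpa using h4) hw0 (by simpa [map_ofNat] using hw)
    exact hasPoint_of_pow_four_eq (by simpa using hx)

end PrimeField

theorem exists_pow_four_eq_seventeen_padicInt_two : ∃ x : ℤ_[2], x ^ 4 = 17 := by
  have h2 : ‖(2 : ℤ_[2])‖ = 2⁻¹ := by simpa using PadicInt.norm_p (p := 2)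
  have h27 : ‖(27 : ℤ_[2])‖ = 1 :=
    PadicInt.norm_eq_one_of_toZMod_ne_zero (by rw [map_ofNat]; decide)
  obtain ⟨x, hx, -⟩ := hensels_lemma (p := 2) (F := X ^ 4 - C (17 : ℤ_[2])) (a := 3) (by
    simp only [derivative_X_pow, derivative_C, sub_zero, map_sub, map_mul,
      map_pow, aeval_X, aeval_C, Algebra.algebraMap_self, RingHom.id_apply]
    rw [show (3 : ℤ_[2]) ^ 4 - 17 = 2 ^ 6 by norm_num,
      show ((4 : ℕ) : ℤ_[2]) * 3 ^ (4 - 1) = 2 ^ 2 * 27 by norm_num,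
      norm_mul, norm_pow, norm_pow, h2, h27]
    norm_num)
  exact ⟨x, by simpa [sub_eq_zero] using hx⟩

theorem hasPoint_padicInt (p : ℕ) [Fact p.Prime] : HasPoint ℤ_[p] := by
  rcases eq_or_ne p 2 with rfl | hp
  · obtain ⟨x, hx⟩ := exists_pow_four_eq_seventeen_padicInt_two
    exact hasPoint_of_pow_four_eq hx
  · have h2 : (2 : ZMod p) ≠ 0 := Ring.two_ne_zero (by rwa [ZMod.ringChar_zmod_n])
    exact hasPoint_padicInt_of_hasSmoothPoint h2 (hasSmoothPoint_zmod h2)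

end ReichardtLind

/-- The Reichardt–Lind curve has points in every completion of ℚ:
nontrivial solutions of `2y² = x⁴ − 17z⁴` exist over every `ℚ_p` and over `ℝ`. -/
theorem reichardt_lind_local_points :
    (∀ (p : ℕ) [Fact p.Prime],
      ∃ x y z : ℚ_[p], ¬(x = 0 ∧ y = 0 ∧ z = 0) ∧
        2 * y ^ 2 = x ^ 4 - 17 * z ^ 4) ∧
    (∃ x y z : ℝ, ¬(x = 0 ∧ y = 0 ∧ z = 0) ∧
      2 * y ^ 2 = x ^ 4 - 17 * z ^ 4) :=
  ⟨fun p _ => (ReichardtLind.hasPoint_padicInt p).map (f := PadicInt.Coe.ringHom)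
    Subtype.coe_injective, ReichardtLind.hasPoint_real⟩
end
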